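/- Let Ω be a connected weighted simplicial complex on [n], let a finite group G act on Ω with the action on ℱ̃ free, and fix convex cones C^[i] ⊆ ℝ[x^[i]] with C^[g·i] = C^[i]. Then for every G-invariant p ∈ 𝒫 one has sep-rank_{(Ω,G)}(p) ≤ |G| · sep-rank_Ω(p) ≤ |G| · sep-rank_{Σ_n}(p), where sep-rank_{Σ_n}(p) is the minimal r such that p = Σ_{α=1}^r p_α^[0](x^[0]) ⋯ p_α^[n](x^[n]) with all p_α^[i] ∈ C^[i]. -/

import Mathlib

namespace PolyDec

open MvPolynomial

attribute [local instance] Classical.propDecidable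

noncomputable section

/-! ### Weighted simplicial complexes -/

/-- `Ω` is a weighted simplicial complex on `[n] = {0,…,n}`. -/
def IsWSC {n : ℕ} (Ω : Finset (Fin (n + 1)) → ℕ) : Prop :=
  (∀ S T : Finset (Fin (n + 1)), S ⊆ T → Ω S ∣ Ω T) ∧ ∀ i : Fin (n + 1), Ω {i} ≠ 0

/-- `F` is a facet of `Ω`: a maximal simplex. -/
def IsFacet {n : ℕ} (Ω : Finset (Fin (n + 1)) → ℕ) (F : Finset (Fin (n + 1))) : Prop :=
  Ω F ≠ 0 ∧ ∀ S : Finset (Fin (n + 1)), Ω S ≠ 0 → F ⊆ S → S = F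

/-- `Ω` is connected: any two vertices are joined by a chain of vertices such that
consecutive ones share a facet. -/
def Conn {n : ℕ} (Ω : Finset (Fin (n + 1)) → ℕ) : Prop :=
  ∀ i j : Fin (n + 1),
    Relation.ReflTransGen
      (fun a b => ∃ F : Finset (Fin (n + 1)), IsFacet Ω F ∧ a ∈ F ∧ b ∈ F) i j

/-- The multiset of facets `ℱ̃`: each facet `F` appears with multiplicity `Ω F`. -/
abbrev MultiFacet {n : ℕ} (Ω : Finset (Fin (n + 1)) → ℕ) : Type :=
  Σ F : {F : Finset (Fin (n + 1)) // IsFacet Ω F}, Fin (Ω F.1)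

/-- The sub-multiset `ℱ̃ᵢ` of multifacets containing the vertex `i`. -/
abbrev MFi {n : ℕ} (Ω : Finset (Fin (n + 1)) → ℕ) (i : Fin (n + 1)) : Type :=
  {F : MultiFacet Ω // i ∈ F.1.1}

/-- Restriction `α|ᵢ` of `α : ℱ̃ → I` to `ℱ̃ᵢ`. -/
def restr {n : ℕ} {Ω : Finset (Fin (n + 1)) → ℕ} {I : Type} (α : MultiFacet Ω → I)
    (i : Fin (n + 1)) : MFi Ω i → I :=
  fun F => α F.1

/-! ### Group actions on a weighted simplicial complex -/

/-- An action of a group `G` on the weighted simplicial complex `Ω`: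
an action on the vertices leaving `Ω` invariant, together with a refinement to an action on
the multiset of facets which is compatible with the collapse map. -/
structure GAct {n : ℕ} (Ω : Finset (Fin (n + 1)) → ℕ) (G : Type) [Group G] where
  act : G →* Equiv.Perm (Fin (n + 1))
  omega_inv : ∀ (g : G) (S : Finset (Fin (n + 1))), Ω (S.image (act g)) = Ω S
  actF : G →* Equiv.Perm (MultiFacet Ω)
  collapse : ∀ (g : G) (F : MultiFacet Ω), (actF g F).1.1 = F.1.1.image (act g)

variable {n : ℕ} {Ω : Finset (Fin (n + 1)) → ℕ} {G : Type} [Group G]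

/-- The action is free on `ℱ̃`. -/
def GAct.Free (A : GAct Ω G) : Prop :=
  ∀ (g : G) (F : MultiFacet Ω), A.actF g F = F → g = 1

/-- The action on the vertices is blending. -/
def GAct.Blending (A : GAct Ω G) : Prop :=
  ∀ gs : Fin (n + 1) → G,
    (Function.Surjective fun i => A.act (gs i) i) →
      ∃ g : G, ∀ i, A.act g i = A.act (gs i) i

theorem GAct.mem_shift (A : GAct Ω G) (g : G) (i : Fin (n + 1)) (F : MFi Ω (A.act g i)) :
    i ∈ (A.actF g⁻¹ F.1).1.1 := by
  rw [A.collapse]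
  refine Finset.mem_image.2 ⟨A.act g i, F.2, ?_⟩
  rw [map_inv]
  first
    | simp
    | exact Equiv.symm_apply_apply _ _

/-- For `β : ℱ̃ᵢ → I`, the shifted function `ᵍβ : ℱ̃_{g·i} → I`, `(ᵍβ)(F) = β (g⁻¹·F)`. -/
def GAct.shift (A : GAct Ω G) (g : G) (i : Fin (n + 1)) {I : Type} (β : MFi Ω i → I) :
    MFi Ω (A.act g i) → I :=
  fun F => β ⟨A.actF g⁻¹ F.1, A.mem_shift g i F⟩

/-! ### Polynomial spaces -/

/-- The space `𝒫 = ℝ[x⁽⁰⁾,…,x⁽ⁿ⁾]`, where block `i` has `m i` variables. -/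
abbrev PSpace {n : ℕ} (m : Fin (n + 1) → ℕ) : Type :=
  MvPolynomial (Σ i : Fin (n + 1), Fin (m i)) ℝ

/-- The local space `ℝ[x⁽ⁱ⁾]`. -/
abbrev LSpace {n : ℕ} (m : Fin (n + 1) → ℕ) (i : Fin (n + 1)) : Type :=
  MvPolynomial (Fin (m i)) ℝ

/-- The inclusion `ℝ[x⁽ⁱ⁾] → 𝒫`. -/
def emb {n : ℕ} (m : Fin (n + 1) → ℕ) (i : Fin (n + 1)) : LSpace m i →ₐ[ℝ] PSpace m :=
  rename fun j => (⟨i, j⟩ : Σ i : Fin (n + 1), Fin (m i))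

variable {m : Fin (n + 1) → ℕ}

/-- The variable permutation `x⁽ⁱ⁾ ↦ x⁽ᵍ·ⁱ⁾` induced by `g`. -/
def permVar (A : GAct Ω G) (hm : ∀ (g : G) (i : Fin (n + 1)), m (A.act g i) = m i) (g : G) :
    (Σ i : Fin (n + 1), Fin (m i)) → Σ i : Fin (n + 1), Fin (m i) :=
  fun v => ⟨A.act g v.1, Fin.cast (hm g v.1).symm v.2⟩

/-- `p` is `G`-invariant: `p(x⁽ᵍ⁰⁾,…,x⁽ᵍⁿ⁾) = p(x⁽⁰⁾,…,x⁽ⁿ⁾)` for all `g ∈ G`. -/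
def GInvPoly (A : GAct Ω G) (hm : ∀ (g : G) (i : Fin (n + 1)), m (A.act g i) = m i)
    (p : PSpace m) : Prop :=
  ∀ g : G, rename (permVar A hm g) p = p

/-! ### Sums of squares, cones -/

/-- `p` is a sum of squares. -/
def IsSos {σ : Type} (p : MvPolynomial σ ℝ) : Prop :=
  ∃ (N : ℕ) (q : Fin N → MvPolynomial σ ℝ), p = ∑ k : Fin N, q k ^ 2

/-- `C` is a convex cone. -/
def IsConvexConeSet {V : Type} [AddCommMonoid V] [Module ℝ V] (C : Set V) : Prop :=
  ∀ p ∈ C, ∀ q ∈ C, ∀ a b : ℝ, 0 ≤ a → 0 ≤ b → a • p + b • q ∈ C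

/-- The local cones agree along orbits, `C⁽ᵍ·ⁱ⁾ = C⁽ⁱ⁾` (under the renaming identification). -/
def ConeCompat (A : GAct Ω G) (hm : ∀ (g : G) (i : Fin (n + 1)), m (A.act g i) = m i)
    (C : ∀ i : Fin (n + 1), Set (LSpace m i)) : Prop :=
  ∀ (g : G) (i : Fin (n + 1)) (q : LSpace m (A.act g i)),
    q ∈ C (A.act g i) ↔ rename (Fin.cast (hm g i)) q ∈ C i

/-- The separable cone `C_sep = C⁽⁰⁾ ⊗ ⋯ ⊗ C⁽ⁿ⁾`. -/
def SepCone {n : ℕ} (m : Fin (n + 1) → ℕ) (C : ∀ i : Fin (n + 1), Set (LSpace m i)) :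
    Set (PSpace m) :=
  {p | ∃ (r : ℕ) (q : Fin r → ∀ i : Fin (n + 1), LSpace m i),
    (∀ j i, q j i ∈ C i) ∧ p = ∑ j : Fin r, ∏ i : Fin (n + 1), emb m i (q j i)}

/-! ### Decompositions and ranks -/

/-- `p` has an `Ω`-decomposition with index set of size `r`. -/
def HasODec {n : ℕ} (Ω : Finset (Fin (n + 1)) → ℕ) (m : Fin (n + 1) → ℕ) (p : PSpace m)
    (r : ℕ) : Prop :=
  ∃ q : ∀ i : Fin (n + 1), (MFi Ω i → Fin r) → LSpace m i,
    p = ∑ α : MultiFacet Ω → Fin r, ∏ i : Fin (n + 1), emb m i (q i (restr α i))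

/-- The `Ω`-rank of `p` (`⊤` if there is no decomposition). -/
def ORank {n : ℕ} (Ω : Finset (Fin (n + 1)) → ℕ) (m : Fin (n + 1) → ℕ) (p : PSpace m) : ℕ∞ :=
  ⨅ r : {r : ℕ // HasODec Ω m p r}, (r.1 : ℕ∞)

/-- `p` has an `(Ω,G)`-decomposition with index set of size `r`. -/
def HasOGDec (A : GAct Ω G) (hm : ∀ (g : G) (i : Fin (n + 1)), m (A.act g i) = m i)
    (p : PSpace m) (r : ℕ) : Prop :=
  ∃ q : ∀ i : Fin (n + 1), (MFi Ω i → Fin r) → LSpace m i,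
    (p = ∑ α : MultiFacet Ω → Fin r, ∏ i : Fin (n + 1), emb m i (q i (restr α i))) ∧
    ∀ (g : G) (i : Fin (n + 1)) (β : MFi Ω i → Fin r),
      rename (Fin.cast (hm g i)) (q (A.act g i) (A.shift g i β)) = q i β

/-- The `(Ω,G)`-rank of `p`. -/
def OGRank (A : GAct Ω G) (hm : ∀ (g : G) (i : Fin (n + 1)), m (A.act g i) = m i)
    (p : PSpace m) : ℕ∞ :=
  ⨅ r : {r : ℕ // HasOGDec A hm p r}, (r.1 : ℕ∞)

/-- `p` has a decomposition on the simplex `Σₙ` (a plain tensor decomposition) of size `r`. -/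
def HasTDec {n : ℕ} (m : Fin (n + 1) → ℕ) (p : PSpace m) (r : ℕ) : Prop :=
  ∃ q : Fin r → ∀ i : Fin (n + 1), LSpace m i,
    p = ∑ j : Fin r, ∏ i : Fin (n + 1), emb m i (q j i)

/-- The tensor rank `rank_{Σₙ}(p)`. -/
def TRank {n : ℕ} (m : Fin (n + 1) → ℕ) (p : PSpace m) : ℕ∞ :=
  ⨅ r : {r : ℕ // HasTDec m p r}, (r.1 : ℕ∞)

/-- Separable `Ω`-decomposition w.r.t. the local cones `C`. -/
def HasSepODec {n : ℕ} (Ω : Finset (Fin (n + 1)) → ℕ) (m : Fin (n + 1) → ℕ)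
    (C : ∀ i : Fin (n + 1), Set (LSpace m i)) (p : PSpace m) (r : ℕ) : Prop :=
  ∃ q : ∀ i : Fin (n + 1), (MFi Ω i → Fin r) → LSpace m i,
    (p = ∑ α : MultiFacet Ω → Fin r, ∏ i : Fin (n + 1), emb m i (q i (restr α i))) ∧
    ∀ i β, q i β ∈ C i

/-- The separable `Ω`-rank. -/
def SepORank {n : ℕ} (Ω : Finset (Fin (n + 1)) → ℕ) (m : Fin (n + 1) → ℕ)
    (C : ∀ i : Fin (n + 1), Set (LSpace m i)) (p : PSpace m) : ℕ∞ :=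
  ⨅ r : {r : ℕ // HasSepODec Ω m C p r}, (r.1 : ℕ∞)

/-- Separable `(Ω,G)`-decomposition w.r.t. the local cones `C`. -/
def HasSepOGDec (A : GAct Ω G) (hm : ∀ (g : G) (i : Fin (n + 1)), m (A.act g i) = m i)
    (C : ∀ i : Fin (n + 1), Set (LSpace m i)) (p : PSpace m) (r : ℕ) : Prop :=
  ∃ q : ∀ i : Fin (n + 1), (MFi Ω i → Fin r) → LSpace m i,
    (p = ∑ α : MultiFacet Ω → Fin r, ∏ i : Fin (n + 1), emb m i (q i (restr α i))) ∧
    (∀ (g : G) (i : Fin (n + 1)) (β : MFi Ω i → Fin r),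
      rename (Fin.cast (hm g i)) (q (A.act g i) (A.shift g i β)) = q i β) ∧
    ∀ i β, q i β ∈ C i

/-- The separable `(Ω,G)`-rank. -/
def SepOGRank (A : GAct Ω G) (hm : ∀ (g : G) (i : Fin (n + 1)), m (A.act g i) = m i)
    (C : ∀ i : Fin (n + 1), Set (LSpace m i)) (p : PSpace m) : ℕ∞ :=
  ⨅ r : {r : ℕ // HasSepOGDec A hm C p r}, (r.1 : ℕ∞)

/-- Separable decomposition on the simplex `Σₙ`. -/
def HasSepTDec {n : ℕ} (m : Fin (n + 1) → ℕ) (C : ∀ i : Fin (n + 1), Set (LSpace m i))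
    (p : PSpace m) (r : ℕ) : Prop :=
  ∃ q : Fin r → ∀ i : Fin (n + 1), LSpace m i,
    (∀ j i, q j i ∈ C i) ∧ p = ∑ j : Fin r, ∏ i : Fin (n + 1), emb m i (q j i)

/-- The separable rank on the simplex. -/
def SepTRank {n : ℕ} (m : Fin (n + 1) → ℕ) (C : ∀ i : Fin (n + 1), Set (LSpace m i))
    (p : PSpace m) : ℕ∞ :=
  ⨅ r : {r : ℕ // HasSepTDec m C p r}, (r.1 : ℕ∞)

/-- `p` has a sum-of-squares `(Ω,G)`-decomposition of size `r`: a `G`-invariant family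
`𝔮 = (q_k)` with `p = ∑ q_k²` together with an `(Ω,G)`-decomposition of the family. -/
def HasSosOGDec (A : GAct Ω G) (hm : ∀ (g : G) (i : Fin (n + 1)), m (A.act g i) = m i)
    (p : PSpace m) (r : ℕ) : Prop :=
  ∃ (s : Fin (n + 1) → ℕ) (hs : ∀ (g : G) (i : Fin (n + 1)), s (A.act g i) = s i)
    (q : ∀ i : Fin (n + 1), Fin (s i) → (MFi Ω i → Fin r) → LSpace m i),
    (p = ∑ k : ∀ i : Fin (n + 1), Fin (s i),
        (∑ α : MultiFacet Ω → Fin r, ∏ i : Fin (n + 1), emb m i (q i (k i) (restr α i))) ^ 2) ∧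
    ∀ (g : G) (i : Fin (n + 1)) (kk : Fin (s i)) (β : MFi Ω i → Fin r),
      rename (Fin.cast (hm g i))
        (q (A.act g i) (Fin.cast (hs g i).symm kk) (A.shift g i β)) = q i kk β

/-- The sos `(Ω,G)`-rank. -/
def SosOGRank (A : GAct Ω G) (hm : ∀ (g : G) (i : Fin (n + 1)), m (A.act g i) = m i)
    (p : PSpace m) : ℕ∞ :=
  ⨅ r : {r : ℕ // HasSosOGDec A hm p r}, (r.1 : ℕ∞)

/-! ### Local degree -/

/-- Every monomial of `p` has degree at most `d` in each block of variables. -/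
def locDegLE {n : ℕ} (m : Fin (n + 1) → ℕ) (p : PSpace m) (d : ℕ) : Prop :=
  ∀ s ∈ p.support, ∀ i : Fin (n + 1), (∑ j : Fin (m i), s ⟨i, j⟩) ≤ d

/-- The local degree of `p`. -/
def locDeg {n : ℕ} (m : Fin (n + 1) → ℕ) (p : PSpace m) : ℕ :=
  sInf {d : ℕ | locDegLE m p d}

/-! ### Tensor decompositions -/

/-- `(Ω,G)`-decomposition of a tensor `T ∈ ℝ^mv ⊗ ⋯ ⊗ ℝ^mv`. -/
def HasTOGDec (A : GAct Ω G) (mv : ℕ) (T : (Fin (n + 1) → Fin mv) → ℝ) (r : ℕ) : Prop :=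
  ∃ v : ∀ i : Fin (n + 1), (MFi Ω i → Fin r) → Fin mv → ℝ,
    (∀ jf : Fin (n + 1) → Fin mv,
      T jf = ∑ α : MultiFacet Ω → Fin r, ∏ i : Fin (n + 1), v i (restr α i) (jf i)) ∧
    ∀ (g : G) (i : Fin (n + 1)) (β : MFi Ω i → Fin r), v (A.act g i) (A.shift g i β) = v i β

/-- The `(Ω,G)`-rank of a tensor. -/
def TOGRank (A : GAct Ω G) (mv : ℕ) (T : (Fin (n + 1) → Fin mv) → ℝ) : ℕ∞ :=
  ⨅ r : {r : ℕ // HasTOGDec A mv T r}, (r.1 : ℕ∞)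

/-- Nonnegative `(Ω,G)`-decomposition of a tensor. -/
def HasNNTOGDec (A : GAct Ω G) (mv : ℕ) (T : (Fin (n + 1) → Fin mv) → ℝ) (r : ℕ) : Prop :=
  ∃ v : ∀ i : Fin (n + 1), (MFi Ω i → Fin r) → Fin mv → ℝ,
    (∀ jf : Fin (n + 1) → Fin mv,
      T jf = ∑ α : MultiFacet Ω → Fin r, ∏ i : Fin (n + 1), v i (restr α i) (jf i)) ∧
    (∀ (g : G) (i : Fin (n + 1)) (β : MFi Ω i → Fin r), v (A.act g i) (A.shift g i β) = v i β) ∧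
    ∀ i β j, 0 ≤ v i β j

/-- The nonnegative `(Ω,G)`-rank of a tensor. -/
def NNTOGRank (A : GAct Ω G) (mv : ℕ) (T : (Fin (n + 1) → Fin mv) → ℝ) : ℕ∞ :=
  ⨅ r : {r : ℕ // HasNNTOGDec A mv T r}, (r.1 : ℕ∞)

/-- Positive semidefinite `(Ω,G)`-decomposition of a tensor. -/
def HasPsdTOGDec (A : GAct Ω G) (mv : ℕ) (T : (Fin (n + 1) → Fin mv) → ℝ) (r : ℕ) : Prop :=
  ∃ E : ∀ i : Fin (n + 1), Fin mv → Matrix (MFi Ω i → Fin r) (MFi Ω i → Fin r) ℝ,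
    (∀ i j, (E i j).PosSemidef) ∧
    (∀ (g : G) (i : Fin (n + 1)) (j : Fin mv) (β β' : MFi Ω i → Fin r),
      E (A.act g i) j (A.shift g i β) (A.shift g i β') = E i j β β') ∧
    ∀ jf : Fin (n + 1) → Fin mv,
      T jf = ∑ α : MultiFacet Ω → Fin r, ∑ α' : MultiFacet Ω → Fin r,
        ∏ i : Fin (n + 1), E i (jf i) (restr α i) (restr α' i)

/-- The positive semidefinite `(Ω,G)`-rank of a tensor. -/
def PsdTOGRank (A : GAct Ω G) (mv : ℕ) (T : (Fin (n + 1) → Fin mv) → ℝ) : ℕ∞ :=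
  ⨅ r : {r : ℕ // HasPsdTOGDec A mv T r}, (r.1 : ℕ∞)

/-- The polynomial `p_T = ∑ T_{j₀…jₙ} (x⁽⁰⁾_{j₀})² ⋯ (x⁽ⁿ⁾_{jₙ})²` associated to a tensor. -/
def pT {n : ℕ} (mv : ℕ) (T : (Fin (n + 1) → Fin mv) → ℝ) :
    PSpace (fun _ : Fin (n + 1) => mv) :=
  ∑ jf : Fin (n + 1) → Fin mv, MvPolynomial.C (T jf) *
    ∏ i : Fin (n + 1), X (⟨i, jf i⟩ : Σ _ : Fin (n + 1), Fin mv) ^ 2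

/-! ### The Gram map -/

/-- Exponent vectors of monomials of degree at most `d` in `mv` variables. -/
abbrev Mon (mv d : ℕ) : Type := {k : Fin mv → Fin (d + 1) // (∑ j : Fin mv, (k j).val) ≤ d}

/-- The monomial at site `i` with exponent vector `k`. -/
def monAt {n : ℕ} {mv d : ℕ} (i : Fin (n + 1)) (k : Mon mv d) :
    PSpace (fun _ : Fin (n + 1) => mv) :=
  ∏ j : Fin mv, X (⟨i, j⟩ : Σ _ : Fin (n + 1), Fin mv) ^ (k.1 j).val

/-- The Gram map `𝒢(M) = 𝔪ᵗ M 𝔪`. -/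
def gram {n : ℕ} {mv d : ℕ}
    (M : Matrix (Fin (n + 1) → Mon mv d) (Fin (n + 1) → Mon mv d) ℝ) :
    PSpace (fun _ : Fin (n + 1) => mv) :=
  ∑ k : Fin (n + 1) → Mon mv d, ∑ k' : Fin (n + 1) → Mon mv d,
    M k k' • ∏ i : Fin (n + 1), (monAt i (k i) * monAt i (k' i))

/-! ### Homogeneous Gram map, norms -/

/-- Exponent vectors of monomials of degree exactly `d` in `mv + 1` variables. -/
abbrev MonH (mv d : ℕ) : Type :=
  {k : Fin (mv + 1) → Fin (d + 1) // (∑ j : Fin (mv + 1), (k j).val) = d}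

/-- The homogeneous monomial at site `i` with exponent vector `k`. -/
def monHAt {n : ℕ} {mv d : ℕ} (i : Fin (n + 1)) (k : MonH mv d) :
    PSpace (fun _ : Fin (n + 1) => mv + 1) :=
  ∏ j : Fin (mv + 1), X (⟨i, j⟩ : Σ _ : Fin (n + 1), Fin (mv + 1)) ^ (k.1 j).val

/-- The Gram map in the homogeneous setting. -/
def gramH {n : ℕ} {mv d : ℕ}
    (M : Matrix (Fin (n + 1) → MonH mv d) (Fin (n + 1) → MonH mv d) ℝ) :
    PSpace (fun _ : Fin (n + 1) => mv + 1) :=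
  ∑ k : Fin (n + 1) → MonH mv d, ∑ k' : Fin (n + 1) → MonH mv d,
    M k k' • ∏ i : Fin (n + 1), (monHAt i (k i) * monHAt i (k' i))

/-- The largest singular value (ℓ²-operator norm) of a real square matrix. -/
def sigmaMax {ι : Type} [Fintype ι] (M : Matrix ι ι ℝ) : ℝ :=
  sSup {r : ℝ | ∃ y : ι → ℝ, (∑ t, y t ^ 2) ≤ 1 ∧ r = Real.sqrt (∑ t, (M.mulVec y t) ^ 2)}

/-- The supremum norm of `p` on `𝕊 = 𝕊^m × ⋯ × 𝕊^m`. -/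
def InfNormH {n mv : ℕ} (p : PSpace (fun _ : Fin (n + 1) => mv + 1)) : ℝ :=
  sSup {r : ℝ | ∃ a : Fin (n + 1) → Fin (mv + 1) → ℝ,
    (∀ i, ∑ j, a i j ^ 2 = 1) ∧
    r = |MvPolynomial.eval (fun v : Σ _ : Fin (n + 1), Fin (mv + 1) => a v.1 v.2) p|}

/-- `p` is homogeneous of degree `d` in each block of variables separately. -/
def MultiHomog {n : ℕ} (m : Fin (n + 1) → ℕ) (d : ℕ) (p : PSpace m) : Prop :=
  ∀ s ∈ p.support, ∀ i : Fin (n + 1), (∑ j : Fin (m i), s ⟨i, j⟩) = d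

/-- `M` is a separable matrix: a sum of elementary tensors of psd matrices. -/
def SepGram {n : ℕ} {mv d : ℕ}
    (M : Matrix (Fin (n + 1) → MonH mv d) (Fin (n + 1) → MonH mv d) ℝ) : Prop :=
  ∃ (N : ℕ) (Ms : Fin N → ∀ _ : Fin (n + 1), Matrix (MonH mv d) (MonH mv d) ℝ),
    (∀ j i, (Ms j i).PosSemidef) ∧
    ∀ k k', M k k' = ∑ j : Fin N, ∏ i : Fin (n + 1), Ms j i (k i) (k' i)

/-- `μ(p)`: the smallest `λ > 0` such that `p = λ·𝒢(M)` for some `G`-invariant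
subnormalized separable matrix `M`. -/
def muP {n : ℕ} {Ω : Finset (Fin (n + 1)) → ℕ} {G : Type} [Group G] (mv d : ℕ) (A : GAct Ω G)
    (p : PSpace (fun _ : Fin (n + 1) => mv + 1)) : ℝ :=
  sInf {l : ℝ | 0 < l ∧
    ∃ M : Matrix (Fin (n + 1) → MonH mv d) (Fin (n + 1) → MonH mv d) ℝ,
      SepGram M ∧ (∑ k, M k k) ≤ 1 ∧
      (∀ (g : G) (k k' : Fin (n + 1) → MonH mv d),
        M (fun i => k (A.act g i)) (fun i => k' (A.act g i)) = M k k') ∧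
      p = l • gramH M}

/-! ### Factorizability -/

/-- `(Ω,G)` is factorizable. -/
def Factorizable (A : GAct Ω G) : Prop :=
  ∀ N : ℕ, ∃ Cf : ∀ i : Fin (n + 1), (MFi Ω i → Fin N) → ℝ,
    (∀ i β, 0 < Cf i β) ∧
    (∀ (g : G) (i : Fin (n + 1)) (β : MFi Ω i → Fin N),
      Cf (A.act g i) (A.shift g i β) = Cf i β) ∧
    ∀ α : MultiFacet Ω → Fin N,
      (∏ i : Fin (n + 1), Cf i (restr α i)) =
        ((Fintype.card {γ : MultiFacet Ω → Fin N //
          ∃ gs : Fin (n + 1) → G, ∀ i : Fin (n + 1), A.act (gs i) i = i ∧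
            ∀ F : MFi Ω i, γ (A.actF (gs i)⁻¹ F.1) = α F.1} : ℕ) : ℝ)⁻¹

/-! ### Two-block (single edge `Λ₁`) ranks -/

/-- The single-edge rank of a two-block polynomial. -/
def rank1 {mv : ℕ} (p : MvPolynomial (Fin mv ⊕ Fin mv) ℝ) : ℕ∞ :=
  ⨅ r : {r : ℕ // ∃ f g : Fin r → MvPolynomial (Fin mv) ℝ,
    p = ∑ α : Fin r, rename Sum.inl (f α) * rename Sum.inr (g α)}, (r.1 : ℕ∞)

/-- The single-edge separable rank (w.r.t. the local sos cones). -/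
def sep1 {mv : ℕ} (p : MvPolynomial (Fin mv ⊕ Fin mv) ℝ) : ℕ∞ :=
  ⨅ r : {r : ℕ // ∃ f g : Fin r → MvPolynomial (Fin mv) ℝ,
    (∀ α, IsSos (f α) ∧ IsSos (g α)) ∧
    p = ∑ α : Fin r, rename Sum.inl (f α) * rename Sum.inr (g α)}, (r.1 : ℕ∞)

/-- The single-edge sos rank. -/
def sos1 {mv : ℕ} (p : MvPolynomial (Fin mv ⊕ Fin mv) ℝ) : ℕ∞ :=
  ⨅ r : {r : ℕ // ∃ (s₀ s₁ : ℕ) (a : Fin s₀ → Fin r → MvPolynomial (Fin mv) ℝ)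
    (b : Fin s₁ → Fin r → MvPolynomial (Fin mv) ℝ),
    p = ∑ k : Fin s₀, ∑ l : Fin s₁,
      (∑ α : Fin r, rename Sum.inl (a k α) * rename Sum.inr (b l α)) ^ 2}, (r.1 : ℕ∞)

/-- The Euclidean-distance-matrix polynomial `p_m = ∑ (i-j)² xᵢ² yⱼ²`. -/
def pm (mv : ℕ) : MvPolynomial (Fin mv ⊕ Fin mv) ℝ :=
  ∑ i : Fin mv, ∑ j : Fin mv,
    MvPolynomial.C (((i : ℕ) : ℝ) - ((j : ℕ) : ℝ)) ^ 2 *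
      (X (Sum.inl i) ^ 2 * X (Sum.inr j) ^ 2)


/-- Constant block sizes are trivially compatible with any group action. -/
theorem constCompat {n : ℕ} {Ω : Finset (Fin (n + 1)) → ℕ} {G : Type} [Group G]
    (A : GAct Ω G) (mv : ℕ) :
    ∀ (g : G) (i : Fin (n + 1)),
      (fun _ : Fin (n + 1) => mv) (A.act g i) = (fun _ : Fin (n + 1) => mv) i :=
  fun _ _ => rfl
/-! ### Auxiliary lemmas for statement 7 -/

section Aux7

variable {n : ℕ} {Ω : Finset (Fin (n + 1)) → ℕ}

theorem exists_facet_superset (hΩ : IsWSC Ω) {S : Finset (Fin (n + 1))} (hS : Ω S ≠ 0) :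
    ∃ F, IsFacet Ω F ∧ S ⊆ F := by
  classical
  obtain ⟨F, hFmem, hmax⟩ := Finset.exists_max_image
    (Finset.univ.filter fun T => Ω T ≠ 0 ∧ S ⊆ T) Finset.card ⟨S, by simp [hS]⟩
  simp only [Finset.mem_filter, Finset.mem_univ, true_and] at hFmem
  refine ⟨F, ⟨hFmem.1, fun T hT hsub => ?_⟩, hFmem.2⟩
  have hTmem : T ∈ Finset.univ.filter fun T => Ω T ≠ 0 ∧ S ⊆ T := by
    simp only [Finset.mem_filter, Finset.mem_univ, true_and]
    exact ⟨hT, hFmem.2.trans hsub⟩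
  exact (Finset.eq_of_subset_of_card_le hsub (hmax T hTmem)).symm

theorem MFi_nonempty (hΩ : IsWSC Ω) (i : Fin (n + 1)) : Nonempty (MFi Ω i) := by
  obtain ⟨F, hF, hsub⟩ := exists_facet_superset hΩ (hΩ.2 i)
  exact ⟨⟨⟨⟨F, hF⟩, ⟨0, Nat.pos_of_ne_zero hF.1⟩⟩, hsub (Finset.mem_singleton_self i)⟩⟩

theorem MultiFacet_nonempty (hΩ : IsWSC Ω) : Nonempty (MultiFacet Ω) :=
  ⟨((MFi_nonempty hΩ 0).some).1⟩

theorem facet_nonempty (hΩ : IsWSC Ω) {F : Finset (Fin (n + 1))} (hF : IsFacet Ω F) :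
    F.Nonempty := by
  rcases Finset.eq_empty_or_nonempty F with h | h
  · subst h
    have := hF.2 {0} (hΩ.2 0) (Finset.empty_subset _)
    exact absurd this (Finset.singleton_ne_empty 0)
  · exact h

theorem locally_const (hΩ : IsWSC Ω) (hconn : Conn Ω) {I : Type*} (ψ : MultiFacet Ω → I)
    (h : ∀ i : Fin (n + 1), ∀ F F' : MFi Ω i, ψ F.1 = ψ F'.1) :
    ∀ F F' : MultiFacet Ω, ψ F = ψ F' := by
  let j : Fin (n + 1) → I := fun i => ψ ((MFi_nonempty hΩ i).some).1
  have hA : ∀ i (F : MFi Ω i), ψ F.1 = j i := fun i F => h i F _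
  have hstep : ∀ a b : Fin (n + 1), (∃ F, IsFacet Ω F ∧ a ∈ F ∧ b ∈ F) → j a = j b := by
    rintro a b ⟨F, hF, ha, hb⟩
    have k : Fin (Ω F) := ⟨0, Nat.pos_of_ne_zero hF.1⟩
    rw [← hA a ⟨⟨⟨F, hF⟩, k⟩, ha⟩, ← hA b ⟨⟨⟨F, hF⟩, k⟩, hb⟩]
  have hchain : ∀ a b : Fin (n + 1), j a = j b := by
    intro a b
    induction hconn a b with
    | refl => rfl
    | tail _ hst ih => exact ih.trans (hstep _ _ hst)
  intro F F'
  obtain ⟨a, ha⟩ := facet_nonempty hΩ F.1.2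
  obtain ⟨b, hb⟩ := facet_nonempty hΩ F'.1.2
  calc ψ F = j a := hA a ⟨F, ha⟩
    _ = j b := hchain a b
    _ = ψ F' := (hA b ⟨F', hb⟩).symm

/-! #### From simplex (tensor) decompositions to `Ω`-decompositions -/

set_option maxHeartbeats 1000000 in
theorem hasSepODec_of_hasSepTDec (hΩ : IsWSC Ω) (hconn : Conn Ω) {m : Fin (n + 1) → ℕ}
    (C : ∀ i : Fin (n + 1), Set (LSpace m i)) (hCcone : ∀ i, IsConvexConeSet (C i))
    {p : PSpace m} {r : ℕ} (hr : HasSepTDec m C p r) : HasSepODec Ω m C p r := by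
  classical
  obtain ⟨q, hqC, hp⟩ := hr
  rcases Nat.eq_zero_or_pos r with rfl | hrpos
  · haveI : IsEmpty (MultiFacet Ω → Fin 0) :=
      ⟨fun f => (f (MultiFacet_nonempty hΩ).some).elim0⟩
    refine ⟨fun i β => (β (MFi_nonempty hΩ i).some).elim0, ?_,
      fun i β => (β (MFi_nonempty hΩ i).some).elim0⟩
    rw [hp]
    simp [Finset.univ_eq_empty]
  · have h0C : ∀ i, (0 : LSpace m i) ∈ C i := by
      intro i
      have := hCcone i _ (hqC ⟨0, hrpos⟩ i) _ (hqC ⟨0, hrpos⟩ i) 0 0 le_rfl le_rfl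
      simpa using this
    set Q : ∀ i : Fin (n + 1), (MFi Ω i → Fin r) → LSpace m i := fun i β =>
      if hc : ∃ jj, ∀ F, β F = jj then q hc.choose i else 0 with hQdef
    have key : ∀ (jj : Fin r) (i : Fin (n + 1)), Q i (fun _ => jj) = q jj i := by
      intro jj i
      have hc : ∃ j', ∀ F : MFi Ω i, (fun _ => jj) F = j' := ⟨jj, fun _ => rfl⟩
      have hch : hc.choose = jj := (hc.choose_spec (MFi_nonempty hΩ i).some).symm
      rw [hQdef]
      simp only
      rw [dif_pos hc, hch]
    have hzero : ∀ α : MultiFacet Ω → Fin r, (¬ ∃ jj, ∀ F, α F = jj) →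
        (∏ i, emb m i (Q i (restr α i))) = 0 := by
      intro α hα
      have hex : ∃ i, ¬ ∃ jj, ∀ F : MFi Ω i, restr α i F = jj := by
        by_contra hno
        push_neg at hno
        apply hα
        have hloc : ∀ i, ∀ F F' : MFi Ω i, α F.1 = α F'.1 := by
          intro i F F'
          obtain ⟨jj, hjj⟩ := hno i
          exact (hjj F).trans (hjj F').symm
        exact ⟨α (MultiFacet_nonempty hΩ).some,
          fun F => locally_const hΩ hconn α hloc F _⟩
      obtain ⟨i, hi⟩ := hex
      refine Finset.prod_eq_zero (Finset.mem_univ i) ?_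
      rw [hQdef]
      simp only
      rw [dif_neg hi, map_zero]
    refine ⟨Q, ?_, ?_⟩
    · have hinj : Function.Injective (fun (j : Fin r) (_ : MultiFacet Ω) => j) := by
        intro x y hxy
        exact congrFun hxy (MultiFacet_nonempty hΩ).some
      set cst : Fin r ↪ (MultiFacet Ω → Fin r) :=
        ⟨fun (j : Fin r) (_ : MultiFacet Ω) => j, hinj⟩ with hcst
      rw [hp]
      calc (∑ j : Fin r, ∏ i, emb m i (q j i))
          = ∑ j : Fin r, ∏ i, emb m i (Q i (restr (cst j) i)) := by
            refine Finset.sum_congr rfl fun j _ => Finset.prod_congr rfl fun i _ => ?_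
            rw [show restr (cst j) i = (fun _ => j) from rfl, key]
        _ = ∑ α ∈ Finset.univ.map cst, ∏ i, emb m i (Q i (restr α i)) :=
            (Finset.sum_map Finset.univ cst
              (fun α => ∏ i, emb m i (Q i (restr α i)))).symm
        _ = ∑ α : MultiFacet Ω → Fin r, ∏ i, emb m i (Q i (restr α i)) := by
            refine Finset.sum_subset (Finset.subset_univ _) fun α _ hα => ?_
            refine hzero α fun hex => hα ?_
            obtain ⟨jj, hjj⟩ := hex
            refine Finset.mem_map.2 ⟨jj, Finset.mem_univ _, ?_⟩
            exact (funext hjj).symm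
    · intro i β
      rw [hQdef]
      simp only
      split
      · exact hqC _ _
      · exact h0C i

end Aux7

section Aux7G

variable {n : ℕ} {Ω : Finset (Fin (n + 1)) → ℕ} {G : Type} [Group G]

theorem actF_mul (A : GAct Ω G) (g g' : G) (F : MultiFacet Ω) :
    A.actF g (A.actF g' F) = A.actF (g * g') F := by rw [map_mul]; rfl

theorem actF_one (A : GAct Ω G) (F : MultiFacet Ω) : A.actF 1 F = F := by rw [map_one]; rfl

theorem act_mul (A : GAct Ω G) (g g' : G) (i : Fin (n + 1)) :
    A.act g (A.act g' i) = A.act (g * g') i := by rw [map_mul]; rfl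

theorem act_one (A : GAct Ω G) (i : Fin (n + 1)) : A.act 1 i = i := by rw [map_one]; rfl

theorem actF_inv_cancel (A : GAct Ω G) (g : G) (F : MultiFacet Ω) :
    A.actF g (A.actF g⁻¹ F) = F := by rw [actF_mul, mul_inv_cancel, actF_one]

theorem mem_actF (A : GAct Ω G) (g : G) {i : Fin (n + 1)} (F : MFi Ω i) :
    A.act g i ∈ (A.actF g F.1).1.1 := by
  rw [A.collapse]; exact Finset.mem_image_of_mem _ F.2

theorem actF_injective (A : GAct Ω G) (hfree : A.Free) {g g' : G} (F : MultiFacet Ω)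
    (h : A.actF g F = A.actF g' F) : g = g' := by
  have h1 : A.actF (g'⁻¹ * g) F = F := by
    rw [← actF_mul, h, actF_mul, inv_mul_cancel, actF_one]
  have := hfree _ _ h1
  rwa [inv_mul_eq_one, eq_comm] at this

/-- The orbit equivalence relation on the multiset of facets. -/
def orbSetoid (A : GAct Ω G) : Setoid (MultiFacet Ω) where
  r F F' := ∃ g, A.actF g F = F'
  iseqv := by
    refine ⟨fun F => ⟨1, actF_one A F⟩, ?_, ?_⟩
    · rintro F F' ⟨g, rfl⟩
      exact ⟨g⁻¹, by rw [actF_mul, inv_mul_cancel, actF_one]⟩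
    · rintro F F' F'' ⟨g, rfl⟩ ⟨g', rfl⟩
      exact ⟨g' * g, (actF_mul A g' g F).symm⟩

/-- An invariantly chosen representative in each orbit. -/
def orbRep (A : GAct Ω G) (F : MultiFacet Ω) : MultiFacet Ω :=
  (Quotient.mk (orbSetoid A) F).out

theorem orbRep_act (A : GAct Ω G) (g : G) (F : MultiFacet Ω) :
    orbRep A (A.actF g F) = orbRep A F := by
  unfold orbRep
  congr 1
  exact Quotient.sound ⟨g⁻¹, by rw [actF_mul, inv_mul_cancel, actF_one]⟩

theorem orbRep_exists (A : GAct Ω G) (F : MultiFacet Ω) :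
    ∃ g, A.actF g (orbRep A F) = F :=
  Quotient.mk_out (s := orbSetoid A) F

/-- The unique group element moving the chosen representative to `F`. -/
def secMap (A : GAct Ω G) (F : MultiFacet Ω) : G := (orbRep_exists A F).choose

theorem secMap_spec (A : GAct Ω G) (F : MultiFacet Ω) :
    A.actF (secMap A F) (orbRep A F) = F := (orbRep_exists A F).choose_spec

theorem secMap_act (A : GAct Ω G) (hfree : A.Free) (g : G) (F : MultiFacet Ω) :
    secMap A (A.actF g F) = g * secMap A F := by
  apply actF_injective A hfree (orbRep A F)
  rw [← actF_mul A g (secMap A F) (orbRep A F), secMap_spec]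
  have := secMap_spec A (A.actF g F)
  rwa [orbRep_act] at this

/-! #### Renaming helpers -/

theorem rename_cast_comp {a b c' : ℕ} (h1 : a = b) (h2 : b = c') (x : MvPolynomial (Fin a) ℝ) :
    rename (Fin.cast h2) (rename (Fin.cast h1) x) = rename (Fin.cast (h1.trans h2)) x := by
  rw [rename_rename]
  rfl

theorem emb_site_transport {m : Fin (n + 1) → ℕ} {i₁ i₂ j : Fin (n + 1)} (hi : i₁ = i₂)
    (x : LSpace m j) (pf1 : m j = m i₁) (pf2 : m j = m i₂) :
    emb m i₁ (rename (Fin.cast pf1) x) = emb m i₂ (rename (Fin.cast pf2) x) := by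
  subst hi
  rfl

theorem q_transport2 {m : Fin (n + 1) → ℕ} {r' : ℕ}
    (q : ∀ i : Fin (n + 1), (MFi Ω i → Fin r') → LSpace m i)
    {i₁ i₂ j : Fin (n + 1)} (hi : i₁ = i₂)
    (γ₁ : MFi Ω i₁ → Fin r') (γ₂ : MFi Ω i₂ → Fin r')
    (hγ : ∀ (F : MultiFacet Ω) (h1 : i₁ ∈ F.1.1) (h2 : i₂ ∈ F.1.1), γ₁ ⟨F, h1⟩ = γ₂ ⟨F, h2⟩)
    (pf1 : m i₁ = m j) (pf2 : m i₂ = m j) :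
    rename (Fin.cast pf1) (q i₁ γ₁) = rename (Fin.cast pf2) (q i₂ γ₂) := by
  subst hi
  have hγ' : γ₁ = γ₂ := funext fun F => hγ F.1 F.2 F.2
  rw [hγ']

theorem rename_perm_emb {m : Fin (n + 1) → ℕ} (A : GAct Ω G)
    (hm : ∀ (g : G) (i : Fin (n + 1)), m (A.act g i) = m i) (h' : G) (i : Fin (n + 1))
    (x : LSpace m i) :
    rename (permVar A hm h') (emb m i x)
      = emb m (A.act h' i) (rename (Fin.cast (hm h' i).symm) x) := by
  show rename _ (rename _ x) = rename _ (rename _ x)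
  rw [rename_rename, rename_rename]
  rfl

theorem prod_emb_smul {m : Fin (n + 1) → ℕ} (c : ℝ) (y : ∀ i : Fin (n + 1), LSpace m i) :
    (∏ i, emb m i (c • y i)) = (c ^ (n + 1)) • ∏ i, emb m i (y i) := by
  have h1 : ∀ i : Fin (n + 1), emb m i (c • y i) = MvPolynomial.C c * emb m i (y i) := by
    intro i
    rw [map_smul, MvPolynomial.smul_eq_C_mul]
  rw [Finset.prod_congr rfl fun i _ => h1 i, Finset.prod_mul_distrib, Finset.prod_const,
    Finset.card_univ, Fintype.card_fin, ← map_pow, ← MvPolynomial.smul_eq_C_mul]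

/-! #### The symmetrized decomposition -/

section Constr
variable {m : Fin (n + 1) → ℕ} {r R : ℕ}

/-- Local index pullback. -/
def GammaF (A : GAct Ω G) (e : G × Fin r ≃ Fin R) (i : Fin (n + 1)) (h : G)
    (β : MFi Ω i → Fin R) : MFi Ω (A.act h i) → Fin r :=
  fun F => (e.symm (β ⟨A.actF h⁻¹ F.1, A.mem_shift h i F⟩)).2

/-- The value of the symmetrized local polynomial for a given group element. -/
def QF (A : GAct Ω G) (hm : ∀ (g : G) (i : Fin (n + 1)), m (A.act g i) = m i)
    (e : G × Fin r ≃ Fin R) (c : ℝ) (q : ∀ i : Fin (n + 1), (MFi Ω i → Fin r) → LSpace m i)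
    (i : Fin (n + 1)) (β : MFi Ω i → Fin R) (h : G) : LSpace m i :=
  c • rename (Fin.cast (hm h i)) (q (A.act h i) (GammaF A e i h β))

/-- The matching condition. -/
def condF (A : GAct Ω G) (e : G × Fin r ≃ Fin R) (s : MultiFacet Ω → G) (i : Fin (n + 1))
    (β : MFi Ω i → Fin R) (h : G) : Prop :=
  ∀ F : MFi Ω i, (e.symm (β F)).1 = h * s F.1

/-- The symmetrized local polynomials. -/
def qF (A : GAct Ω G) (hm : ∀ (g : G) (i : Fin (n + 1)), m (A.act g i) = m i)
    (e : G × Fin r ≃ Fin R) (s : MultiFacet Ω → G) (c : ℝ)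
    (q : ∀ i : Fin (n + 1), (MFi Ω i → Fin r) → LSpace m i)
    (i : Fin (n + 1)) (β : MFi Ω i → Fin R) : LSpace m i :=
  if hc : ∃ h, condF A e s i β h then QF A hm e c q i β hc.choose else 0

/-- The global index parametrization. -/
def PhiF (A : GAct Ω G) (e : G × Fin r ≃ Fin R) (s : MultiFacet Ω → G)
    (ha : G × (MultiFacet Ω → Fin r)) : MultiFacet Ω → Fin R :=
  fun F => e (ha.1 * s F, ha.2 (A.actF ha.1 F))

variable {A : GAct Ω G}
  {hm : ∀ (g : G) (i : Fin (n + 1)), m (A.act g i) = m i}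
  {e : G × Fin r ≃ Fin R} {c : ℝ}
  {q : ∀ i : Fin (n + 1), (MFi Ω i → Fin r) → LSpace m i}

theorem condF_unique (hΩ : IsWSC Ω) (s : MultiFacet Ω → G) {i : Fin (n + 1)} {β : MFi Ω i → Fin R} {h h' : G}
    (H : condF A e s i β h) (H' : condF A e s i β h') : h = h' := by
  obtain ⟨F⟩ := MFi_nonempty hΩ i
  exact mul_right_cancel ((H F).symm.trans (H' F))

theorem qF_eval (hΩ : IsWSC Ω) (s : MultiFacet Ω → G) {i : Fin (n + 1)} {β : MFi Ω i → Fin R}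
    {h : G} (H : condF A e s i β h) :
    qF A hm e s c q i β = QF A hm e c q i β h := by
  have hc : ∃ h, condF A e s i β h := ⟨h, H⟩
  unfold qF
  rw [dif_pos hc]
  exact congrArg (QF A hm e c q i β) (condF_unique hΩ s hc.choose_spec H)

theorem condF_shift_iff (hfree : A.Free) (g : G) (i : Fin (n + 1)) (β : MFi Ω i → Fin R)
    (h' : G) :
    condF A e (secMap A) (A.act g i) (A.shift g i β) h' ↔ condF A e (secMap A) i β (h' * g) := by
  constructor
  · intro H F'
    have harg : (A.shift g i β) ⟨A.actF g F'.1, mem_actF A g F'⟩ = β F' := by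
      simp only [GAct.shift]
      congr 1
      refine Subtype.ext ?_
      show A.actF g⁻¹ (A.actF g F'.1) = F'.1
      rw [actF_mul, inv_mul_cancel, actF_one]
    have hH := H ⟨A.actF g F'.1, mem_actF A g F'⟩
    rw [harg] at hH
    show (e.symm (β F')).1 = h' * g * secMap A F'.1
    rw [hH]
    show h' * secMap A (A.actF g F'.1) = h' * g * secMap A F'.1
    rw [secMap_act A hfree, mul_assoc]
  · intro H F
    simp only [GAct.shift]
    rw [H ⟨A.actF g⁻¹ F.1, A.mem_shift g i F⟩]
    show h' * g * secMap A (A.actF g⁻¹ F.1) = h' * secMap A F.1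
    conv_rhs => rw [← actF_inv_cancel A g F.1, secMap_act A hfree]
    rw [mul_assoc]

theorem qF_mem_cone (hrpos : 0 < r) (hc0 : 0 ≤ c)
    (C : ∀ i : Fin (n + 1), Set (LSpace m i)) (hCcone : ∀ i, IsConvexConeSet (C i))
    (hCcomp : ConeCompat A hm C) (hqC : ∀ i β, q i β ∈ C i)
    (i : Fin (n + 1)) (β : MFi Ω i → Fin R) (s : MultiFacet Ω → G) :
    qF A hm e s c q i β ∈ C i := by
  unfold qF
  split
  · rename_i hc
    have h1 := hqC (A.act hc.choose i) (GammaF A e i hc.choose β)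
    have h2 := (hCcomp hc.choose i _).mp h1
    have h3 := hCcone i _ h2 _ h2 c 0 hc0 le_rfl
    rw [zero_smul, add_zero] at h3
    exact h3
  · have hx := hqC i (fun _ => ⟨0, hrpos⟩)
    have h3 := hCcone i _ hx _ hx 0 0 le_rfl le_rfl
    rw [zero_smul, zero_add] at h3
    exact h3

theorem qF_equivariant (hΩ : IsWSC Ω) (hfree : A.Free) (g : G) (i : Fin (n + 1))
    (β : MFi Ω i → Fin R) :
    rename (Fin.cast (hm g i)) (qF A hm e (secMap A) c q (A.act g i) (A.shift g i β))
      = qF A hm e (secMap A) c q i β := by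
  by_cases hc : ∃ h, condF A e (secMap A) i β h
  · obtain ⟨h, H⟩ := hc
    have H' : condF A e (secMap A) (A.act g i) (A.shift g i β) (h * g⁻¹) := by
      rw [condF_shift_iff hfree]
      rwa [inv_mul_cancel_right]
    rw [qF_eval hΩ _ H', qF_eval hΩ _ H]
    unfold QF
    rw [map_smul, rename_cast_comp]
    congr 1
    refine q_transport2 q ?_ _ _ ?_ _ _
    · rw [act_mul]
      have hgr : h * g⁻¹ * g = h := by group
      rw [hgr]
    · intro F h1 h2
      simp only [GammaF, GAct.shift]
      refine congrArg (fun X => (e.symm (β X)).2) (Subtype.ext ?_)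
      show A.actF g⁻¹ (A.actF (h * g⁻¹)⁻¹ F) = A.actF h⁻¹ F
      rw [actF_mul]
      have hgr : g⁻¹ * (h * g⁻¹)⁻¹ = h⁻¹ := by group
      rw [hgr]
  · have hc' : ¬ ∃ h', condF A e (secMap A) (A.act g i) (A.shift g i β) h' := by
      rintro ⟨h', H'⟩
      rw [condF_shift_iff hfree] at H'
      exact hc ⟨h' * g, H'⟩
    unfold qF
    rw [dif_neg hc, dif_neg hc', map_zero]

theorem PhiF_injective (hΩ' : IsWSC Ω) (A : GAct Ω G) (e : G × Fin r ≃ Fin R) :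
    Function.Injective (PhiF A e (secMap A)) := by
  rintro ⟨h₁, α₁⟩ ⟨h₂, α₂⟩ heq
  obtain ⟨X₀⟩ := MultiFacet_nonempty hΩ'
  have h1 := e.injective (congrFun heq X₀)
  have hh : h₁ = h₂ := mul_right_cancel (congrArg Prod.fst h1)
  subst hh
  refine Prod.ext rfl ?_
  funext Y
  have h2 := e.injective (congrFun heq (A.actF h₁⁻¹ Y))
  have h3 : α₁ (A.actF h₁ (A.actF h₁⁻¹ Y)) = α₂ (A.actF h₁ (A.actF h₁⁻¹ Y)) :=
    congrArg Prod.snd h2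
  rwa [actF_inv_cancel] at h3

theorem qF_eval_Phi (hΩ : IsWSC Ω) (h : G) (α : MultiFacet Ω → Fin r) (i : Fin (n + 1)) :
    qF A hm e (secMap A) c q i (restr (PhiF A e (secMap A) (h, α)) i)
      = c • rename (Fin.cast (hm h i)) (q (A.act h i) (restr α (A.act h i))) := by
  have hcond : condF A e (secMap A) i (restr (PhiF A e (secMap A) (h, α)) i) h := by
    intro F
    show (e.symm (PhiF A e (secMap A) (h, α) F.1)).1 = h * secMap A F.1
    unfold PhiF
    rw [Equiv.symm_apply_apply]
  have harg : GammaF A e i h (restr (PhiF A e (secMap A) (h, α)) i) = restr α (A.act h i) := by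
    funext F
    show (e.symm (PhiF A e (secMap A) (h, α) (A.actF h⁻¹ F.1))).2 = α F.1
    unfold PhiF
    rw [Equiv.symm_apply_apply]
    show α (A.actF h (A.actF h⁻¹ F.1)) = α F.1
    rw [actF_inv_cancel]
  rw [qF_eval hΩ _ hcond]
  unfold QF
  rw [harg]

end Constr

end Aux7G

section Aux7Main

variable {n : ℕ} {Ω : Finset (Fin (n + 1)) → ℕ}

theorem actF_cancel_left {G : Type} [Group G] (A : GAct Ω G) (g : G) (F : MultiFacet Ω) :
    A.actF g⁻¹ (A.actF g F) = F := by rw [actF_mul, inv_mul_cancel, actF_one]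

set_option maxHeartbeats 2000000 in
theorem hasSepOGDec_of_hasSepODec {G : Type} [Group G] [Fintype G]
    (hΩ : IsWSC Ω) (hconn : Conn Ω) (A : GAct Ω G) (hfree : A.Free)
    {m : Fin (n + 1) → ℕ} (hm : ∀ (g : G) (i : Fin (n + 1)), m (A.act g i) = m i)
    (C : ∀ i : Fin (n + 1), Set (LSpace m i)) (hCcone : ∀ i, IsConvexConeSet (C i))
    (hCcomp : ConeCompat A hm C) {p : PSpace m} (hinv : GInvPoly A hm p) {r : ℕ}
    (hdec : HasSepODec Ω m C p r) :
    HasSepOGDec A hm C p (Fintype.card G * r) := by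
  classical
  obtain ⟨q, hp, hqC⟩ := hdec
  rcases Nat.eq_zero_or_pos r with rfl | hrpos
  · haveI : IsEmpty (MultiFacet Ω → Fin (Fintype.card G * 0)) :=
      ⟨fun f => (f (MultiFacet_nonempty hΩ).some).elim0⟩
    haveI : IsEmpty (MultiFacet Ω → Fin 0) :=
      ⟨fun f => (f (MultiFacet_nonempty hΩ).some).elim0⟩
    refine ⟨fun i β => (β (MFi_nonempty hΩ i).some).elim0, ?_,
      fun g i β => (β (MFi_nonempty hΩ i).some).elim0,
      fun i β => (β (MFi_nonempty hΩ i).some).elim0⟩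
    rw [hp]
    simp [Finset.univ_eq_empty]
  · obtain ⟨c, hc0, hcpow⟩ : ∃ c : ℝ, 0 ≤ c ∧ c ^ (n + 1) = ((Fintype.card G : ℝ))⁻¹ := by
      refine ⟨((Fintype.card G : ℝ))⁻¹ ^ (((n : ℝ) + 1)⁻¹),
        Real.rpow_nonneg (by positivity) _, ?_⟩
      rw [← Real.rpow_natCast (((Fintype.card G : ℝ))⁻¹ ^ (((n : ℝ) + 1)⁻¹)) (n + 1),
        ← Real.rpow_mul (by positivity)]
      push_cast
      rw [inv_mul_cancel₀ (by positivity), Real.rpow_one]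
    obtain ⟨e⟩ : Nonempty (G × Fin r ≃ Fin (Fintype.card G * r)) :=
      ⟨Fintype.equivFinOfCardEq (by simp)⟩
    -- per-element reindexed decomposition
    have hph : ∀ h : G, (∑ α : MultiFacet Ω → Fin r, ∏ i, emb m i
        (rename (Fin.cast (hm h i)) (q (A.act h i) (restr α (A.act h i))))) = p := by
      intro h
      conv_rhs => rw [← hinv h⁻¹, hp, map_sum]
      refine Finset.sum_congr rfl fun α _ => ?_
      rw [map_prod]
      rw [← Equiv.prod_comp (A.act h : Equiv.Perm (Fin (n + 1)))
        (fun i => rename (permVar A hm h⁻¹) (emb m i (q i (restr α i))))]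
      refine Finset.prod_congr rfl fun i _ => ?_
      rw [rename_perm_emb A hm h⁻¹ (A.act h i) (q (A.act h i) (restr α (A.act h i)))]
      exact emb_site_transport (by rw [act_mul, inv_mul_cancel, act_one])
        (q (A.act h i) (restr α (A.act h i))) (hm h i) ((hm h⁻¹ (A.act h i)).symm)
    have hsum : (∑ α' : MultiFacet Ω → Fin (Fintype.card G * r),
        ∏ i, emb m i (qF A hm e (secMap A) c q i (restr α' i))) = p := by
      have hinjPhi : Function.Injective (PhiF A e (secMap A)) := PhiF_injective hΩ A e
      calc (∑ α' : MultiFacet Ω → Fin (Fintype.card G * r),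
            ∏ i, emb m i (qF A hm e (secMap A) c q i (restr α' i)))
          = ∑ α' ∈ Finset.univ.map ⟨PhiF A e (secMap A), hinjPhi⟩,
              ∏ i, emb m i (qF A hm e (secMap A) c q i (restr α' i)) := by
            symm
            refine Finset.sum_subset (Finset.subset_univ _) fun α' _ hα' => ?_
            have hnc : ∃ i, ¬ ∃ h, condF A e (secMap A) i (restr α' i) h := by
              by_contra hno
              push_neg at hno
              refine hα' ?_
              set X₀ : MultiFacet Ω := (MultiFacet_nonempty hΩ).some with hX₀
              have hψc : ∀ X X' : MultiFacet Ω,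
                  (e.symm (α' X)).1 * (secMap A X)⁻¹
                    = (e.symm (α' X')).1 * (secMap A X')⁻¹ := by
                refine locally_const hΩ hconn
                  (fun X => (e.symm (α' X)).1 * (secMap A X)⁻¹) fun i F F' => ?_
                obtain ⟨h, hh⟩ := hno i
                simp only [condF, restr] at hh
                show (e.symm (α' F.1)).1 * (secMap A F.1)⁻¹
                  = (e.symm (α' F'.1)).1 * (secMap A F'.1)⁻¹
                rw [hh F, hh F', mul_inv_cancel_right, mul_inv_cancel_right]
              obtain ⟨h₀, hψ⟩ : ∃ h₀ : G, ∀ X : MultiFacet Ω,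
                  (e.symm (α' X)).1 * (secMap A X)⁻¹ = h₀ :=
                ⟨(e.symm (α' X₀)).1 * (secMap A X₀)⁻¹, fun X => hψc X X₀⟩
              have h1 : ∀ X : MultiFacet Ω, h₀ * secMap A X = (e.symm (α' X)).1 :=
                fun X => by rw [← hψ X, inv_mul_cancel_right]
              refine Finset.mem_map.2
                ⟨(h₀, fun X => (e.symm (α' (A.actF h₀⁻¹ X))).2), Finset.mem_univ _, ?_⟩
              show PhiF A e (secMap A) _ = α'
              funext X
              simp only [PhiF]
              rw [actF_cancel_left, h1 X]
              exact e.apply_symm_apply (α' X)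
            obtain ⟨i, hi⟩ := hnc
            refine Finset.prod_eq_zero (Finset.mem_univ i) ?_
            rw [show qF A hm e (secMap A) c q i (restr α' i) = 0 from by
              unfold qF; rw [dif_neg hi], map_zero]
        _ = ∑ ha : G × (MultiFacet Ω → Fin r),
              ∏ i, emb m i (qF A hm e (secMap A) c q i
                (restr (PhiF A e (secMap A) ha) i)) :=
            Finset.sum_map Finset.univ ⟨PhiF A e (secMap A), hinjPhi⟩
              (fun α' => ∏ i, emb m i (qF A hm e (secMap A) c q i (restr α' i)))
        _ = ∑ h : G, ∑ α : MultiFacet Ω → Fin r, ((Fintype.card G : ℝ))⁻¹ •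
              ∏ i, emb m i (rename (Fin.cast (hm h i))
                (q (A.act h i) (restr α (A.act h i)))) := by
            rw [Fintype.sum_prod_type]
            refine Finset.sum_congr rfl fun h _ => Finset.sum_congr rfl fun α _ => ?_
            rw [Finset.prod_congr rfl fun i _ => congrArg (emb m i) (qF_eval_Phi hΩ h α i)]
            rw [prod_emb_smul, hcpow]
        _ = ∑ h : G, ((Fintype.card G : ℝ))⁻¹ • p := by
            refine Finset.sum_congr rfl fun h _ => ?_
            rw [← Finset.smul_sum, hph h]
        _ = p := by
            rw [Finset.sum_const, Finset.card_univ, ← Nat.cast_smul_eq_nsmul ℝ, smul_smul,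
              mul_inv_cancel₀ (by exact_mod_cast Fintype.card_ne_zero), one_smul]
    exact ⟨qF A hm e (secMap A) c q, hsum.symm,
      fun g i β => qF_equivariant hΩ hfree g i β,
      fun i β => qF_mem_cone hrpos hc0 C hCcone hCcomp hqC i β (secMap A)⟩

end Aux7Main

/-- `sep-rank_{(Ω,G)}(p) ≤ |G|·sep-rank_Ω(p) ≤ |G|·sep-rank_{Σₙ}(p)`. -/
theorem statement7 {n : ℕ} {Ω : Finset (Fin (n + 1)) → ℕ} (hΩ : IsWSC Ω) (hconn : Conn Ω)
    {G : Type} [Group G] [Fintype G] (A : GAct Ω G) (hfree : A.Free)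
    {m : Fin (n + 1) → ℕ} (hm : ∀ (g : G) (i : Fin (n + 1)), m (A.act g i) = m i)
    (C : ∀ i : Fin (n + 1), Set (LSpace m i))
    (hCcone : ∀ i, IsConvexConeSet (C i)) (hCcomp : ConeCompat A hm C)
    (p : PSpace m) (hinv : GInvPoly A hm p) :
    SepOGRank A hm C p ≤ (Fintype.card G : ℕ∞) * SepORank Ω m C p ∧
    (Fintype.card G : ℕ∞) * SepORank Ω m C p ≤ (Fintype.card G : ℕ∞) * SepTRank m C p := by
  constructor
  · by_cases hne : Nonempty {r : ℕ // HasSepODec Ω m C p r}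
    · obtain ⟨⟨r₁, hr₁⟩⟩ := hne
      have hex : ∃ r', HasSepODec Ω m C p r' := ⟨r₁, hr₁⟩
      classical
      have hfind := Nat.find_spec hex
      have hrank : SepORank Ω m C p = (Nat.find hex : ℕ∞) := by
        refine le_antisymm (iInf_le (fun r : {r : ℕ // HasSepODec Ω m C p r} => (r.1 : ℕ∞)) ⟨Nat.find hex, hfind⟩) (le_iInf fun r' => ?_)
        exact_mod_cast Nat.find_min' hex r'.2
      rw [hrank]
      have hog := hasSepOGDec_of_hasSepODec hΩ hconn A hfree hm C hCcone hCcomp hinv hfind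
      have h1 : SepOGRank A hm C p ≤ ((Fintype.card G * Nat.find hex : ℕ) : ℕ∞) :=
        iInf_le (fun r : {r : ℕ // HasSepOGDec A hm C p r} => (r.1 : ℕ∞)) ⟨_, hog⟩
      rwa [Nat.cast_mul] at h1
    · have htop : SepORank Ω m C p = ⊤ := by
        haveI := not_nonempty_iff.mp hne
        exact iInf_of_empty _
      rw [htop, ENat.mul_top
        (by exact_mod_cast Fintype.card_ne_zero : (Fintype.card G : ℕ∞) ≠ 0)]
      exact le_top
  · refine mul_le_mul_right (le_iInf fun r' => ?_) _
    exact iInf_le (fun r'' : {r'' : ℕ // HasSepODec Ω m C p r''} => (r''.1 : ℕ∞))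
      ⟨r'.1, hasSepODec_of_hasSepTDec hΩ hconn C hCcone r'.2⟩

end
end PolyDec
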